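/- Suppose a discrete-time linear system with matrices A ∈ ℝ^{n×n}, B ∈ ℝ^{n×p}, C ∈ ℝ^{m×n} has relative degree at least k_e, i.e., C A^i B = 0 for all i < k_e − 1. Let 𝒜 = A − K C A + B L for arbitrary K ∈ ℝ^{n×m}, L ∈ ℝ^{p×n}. Then C A 𝒜^{k_e − 2} B = C A^{k_e − 1} B. -/
import Mathlib


open Matrix

/-- If the system has relative degree at least `k_e` (i.e. `C Aⁱ B = 0` for
`i < k_e − 1`) and `𝒜 = A − K C A + B L`, then `C A 𝒜^{k_e−2} B = C A^{k_e−1} B`. -/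
theorem relative_degree_power_identity {n m p : ℕ} (ke : ℕ) (hke : 2 ≤ ke)
    (A : Matrix (Fin n) (Fin n) ℝ) (B : Matrix (Fin n) (Fin p) ℝ)
    (C : Matrix (Fin m) (Fin n) ℝ) (K : Matrix (Fin n) (Fin m) ℝ)
    (L : Matrix (Fin p) (Fin n) ℝ)
    (hrel : ∀ i : ℕ, i < ke - 1 → C * A ^ i * B = 0) :
    C * A * (A - K * C * A + B * L) ^ (ke - 2) * B = C * A ^ (ke - 1) * B := by
  set 𝒜 := A - K * C * A + B * L with h𝒜
  -- `C A^{i+1} B = 0` whenever `i + 1 < ke - 1`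
  have hsmall : ∀ i : ℕ, i + 1 < ke - 1 → C * A ^ (i + 1) * B = 0 := fun i hi =>
    hrel (i + 1) hi
  -- key invariant
  have key : ∀ j : ℕ, j ≤ ke - 2 → ∃ N : ℕ → Matrix (Fin m) (Fin m) ℝ,
      C * A * 𝒜 ^ j = C * A ^ (j + 1) +
        ∑ i ∈ Finset.range j, N i * (C * A ^ (i + 1)) := by
    intro j
    induction j with
    | zero => intro _; exact ⟨0, by simp⟩
    | succ j ih =>
      intro hj
      obtain ⟨N, hN⟩ := ih (by omega)
      -- `C A 𝒜^j B = 0`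
      have hzero : C * A * 𝒜 ^ j * B = 0 := by
        rw [hN, Matrix.add_mul, Matrix.sum_mul]
        rw [hsmall j (by omega)]
        rw [Finset.sum_eq_zero, add_zero]
        intro i hi
        rw [Matrix.mul_assoc, hsmall i (by simp at hi; omega), Matrix.mul_zero]
      have expand : C * A * 𝒜 ^ (j + 1) =
          C * A * 𝒜 ^ j * A - (C * A * 𝒜 ^ j * K) * (C * A) +
            (C * A * 𝒜 ^ j * B) * L := by
        rw [pow_succ, ← Matrix.mul_assoc, h𝒜]
        rw [Matrix.mul_add, Matrix.mul_sub]
        rw [show C * A * 𝒜 ^ j * (K * C * A) = C * A * 𝒜 ^ j * K * (C * A) by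
          simp only [Matrix.mul_assoc]]
        rw [show C * A * 𝒜 ^ j * (B * L) = C * A * 𝒜 ^ j * B * L by
          simp only [Matrix.mul_assoc]]
      refine ⟨fun i => if i = 0 then -(C * A * 𝒜 ^ j * K) else N (i - 1), ?_⟩
      rw [expand, hzero, Matrix.zero_mul, add_zero, hN, Matrix.add_mul,
        Matrix.sum_mul]
      rw [Finset.sum_range_succ']
      simp only [if_pos rfl, Nat.add_sub_cancel]
      have : ∀ i ∈ Finset.range j,
          N i * (C * A ^ (i + 1)) * A
            = (if i + 1 = 0 then -(C * A * 𝒜 ^ j * K) else N (i + 1 - 1)) *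
              (C * A ^ (i + 1 + 1)) := by
        intro i _
        simp [pow_succ, Matrix.mul_assoc]
      rw [Finset.sum_congr rfl this, ← hN]
      simp only [Nat.succ_ne_zero, if_false, if_true, Nat.add_sub_cancel,
        Nat.zero_add, pow_one]
      rw [show C * A ^ (j + 1) * A = C * A ^ (j + 1 + 1) by
        simp [pow_succ, Matrix.mul_assoc]]
      rw [Matrix.neg_mul]
      abel
  obtain ⟨N, hN⟩ := key (ke - 2) le_rfl
  have h21 : ke - 2 + 1 = ke - 1 := by omega
  rw [hN, h21, Matrix.add_mul, Matrix.sum_mul]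
  rw [Finset.sum_eq_zero, add_zero]
  intro i hi
  rw [Matrix.mul_assoc, hsmall i (by simp at hi; omega), Matrix.mul_zero]
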